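/- Let P₁, P₂ be orthogonal projections onto subspaces T₁, T₂ of ℝ^n with Friedrichs angle ζ_F > 0 between them, and let M = P₁P₂ + (Id−P₁)(Id−P₂). Let M∞ = lim_{k→∞} M^k (which exists since M is firmly non-expansive linear), and T̃ = M − M∞. If v₀ satisfies M∞v₀ = 0, then M^k v₀ = T̃^k v₀ for all k ≥ 0, and ‖T̃^k v₀‖ ≤ cos(ζ_F)^k ‖v₀‖. -/

import Mathlib

open Matrix

/-- The Euclidean norm of a finitely-indexed real vector. -/
noncomputable def euclNorm {ι : Type*} [Fintype ι] (x : ι → ℝ) : ℝ :=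
  Real.sqrt (∑ i, x i ^ 2)

namespace Stmt17Aux

variable {n : ℕ}

noncomputable def eE : EuclideanSpace ℝ (Fin n) ≃ₗ[ℝ] (Fin n → ℝ) :=
  WithLp.linearEquiv 2 ℝ (Fin n → ℝ)

lemma dot_eq_inner (x y : Fin n → ℝ) :
    x ⬝ᵥ y = (inner ℝ ((eE (n := n)).symm x) ((eE (n := n)).symm y) : ℝ) := by
  simp [PiLp.inner_apply, RCLike.inner_apply, dotProduct, eE, mul_comm]

lemma euclNorm_eq_norm (x : Fin n → ℝ) : euclNorm x = ‖(eE (n := n)).symm x‖ := by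
  simp [euclNorm, EuclideanSpace.norm_eq, sq_abs]
  rfl

lemma euclNorm_nonneg (x : Fin n → ℝ) : 0 ≤ euclNorm x := Real.sqrt_nonneg _

lemma euclNorm_sq (x : Fin n → ℝ) : euclNorm x ^ 2 = x ⬝ᵥ x := by
  rw [euclNorm, Real.sq_sqrt (by positivity)]
  simp [dotProduct, pow_two]

lemma euclNorm_eq_zero {x : Fin n → ℝ} : euclNorm x = 0 ↔ x = 0 := by
  rw [euclNorm_eq_norm, norm_eq_zero, EmbeddingLike.map_eq_zero_iff]

lemma dot_le_norms (x y : Fin n → ℝ) : x ⬝ᵥ y ≤ euclNorm x * euclNorm y := by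
  rw [dot_eq_inner, euclNorm_eq_norm, euclNorm_eq_norm]
  exact real_inner_le_norm _ _

lemma euclNorm_smul (c : ℝ) (x : Fin n → ℝ) : euclNorm (c • x) = |c| * euclNorm x := by
  rw [euclNorm_eq_norm, euclNorm_eq_norm, _root_.map_smul, norm_smul, Real.norm_eq_abs]

lemma euclNorm_le_of_sq_le {x y : Fin n → ℝ} (h : x ⬝ᵥ x ≤ y ⬝ᵥ y) :
    euclNorm x ≤ euclNorm y := by
  have h1 := euclNorm_sq x; have h2 := euclNorm_sq y
  nlinarith [euclNorm_nonneg x, euclNorm_nonneg y]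

lemma pythag {x y : Fin n → ℝ} (h : x ⬝ᵥ y = 0) :
    (x + y) ⬝ᵥ (x + y) = x ⬝ᵥ x + y ⬝ᵥ y := by
  have := dotProduct_comm x y
  simp [dotProduct_add, add_dotProduct, h, this ▸ h]

noncomputable def projL (S : Submodule ℝ (Fin n → ℝ)) : (Fin n → ℝ) →ₗ[ℝ] (Fin n → ℝ) :=
  (eE (n := n)).toLinearMap ∘ₗ
    ((S.comap (eE (n := n)).toLinearMap).subtype ∘ₗ
      (Submodule.orthogonalProjectionOnto (S.comap (eE (n := n)).toLinearMap)).toLinearMap) ∘ₗ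
    (eE (n := n)).symm.toLinearMap

lemma projL_mem (S : Submodule ℝ (Fin n → ℝ)) (x : Fin n → ℝ) : projL S x ∈ S := by
  have h : ((Submodule.orthogonalProjectionOnto (S.comap (eE (n := n)).toLinearMap)
      ((eE (n := n)).symm x) : EuclideanSpace ℝ (Fin n))) ∈
      S.comap (eE (n := n)).toLinearMap := Submodule.coe_mem _
  rw [Submodule.mem_comap] at h
  simpa [projL] using h

lemma projL_orth (S : Submodule ℝ (Fin n → ℝ)) (x : Fin n → ℝ) :
    ∀ w ∈ S, (x - projL S x) ⬝ᵥ w = 0 := by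
  intro w hw
  have hmem : ((eE (n := n)).symm x - Submodule.orthogonalProjectionOnto (S.comap (eE (n := n)).toLinearMap)
      ((eE (n := n)).symm x)) ∈ (S.comap (eE (n := n)).toLinearMap)ᗮ :=
    by exact Submodule.sub_starProjection_mem_orthogonal _
  have hw' : (eE (n := n)).symm w ∈ S.comap (eE (n := n)).toLinearMap := by
    simpa [Submodule.mem_comap] using hw
  have := hmem ((eE (n := n)).symm w) hw'
  rw [dot_eq_inner]
  rw [real_inner_comm]
  convert this using 2
  simp [projL]

lemma dot_self_zero {x : Fin n → ℝ} (h : x ⬝ᵥ x = 0) : x = 0 := by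
  rw [← euclNorm_sq] at h
  exact euclNorm_eq_zero.mp (by nlinarith [euclNorm_nonneg x])

lemma projL_fix (S : Submodule ℝ (Fin n → ℝ)) {x : Fin n → ℝ} (hx : x ∈ S) :
    projL S x = x := by
  have hd : (x - projL S x) ⬝ᵥ (x - projL S x) = 0 :=
    projL_orth S x _ (Submodule.sub_mem S hx (projL_mem S x))
  have := dot_self_zero hd
  linear_combination (norm := module) -this

lemma projL_eq_zero_iff (S : Submodule ℝ (Fin n → ℝ)) {x : Fin n → ℝ} :
    projL S x = 0 ↔ ∀ w ∈ S, x ⬝ᵥ w = 0 := by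
  constructor
  · intro h w hw
    have := projL_orth S x w hw
    rw [h, sub_zero] at this
    exact this
  · intro h
    have h1 : (x - projL S x) ⬝ᵥ projL S x = 0 := projL_orth S x _ (projL_mem S x)
    have h2 : x ⬝ᵥ projL S x = 0 := h _ (projL_mem S x)
    have h3 : projL S x ⬝ᵥ projL S x = 0 := by
      have := sub_dotProduct x (projL S x) (projL S x)
      rw [h1, h2] at this
      linarith
    exact dot_self_zero h3

lemma projL_symm_dot (S : Submodule ℝ (Fin n → ℝ)) (x y : Fin n → ℝ) :
    projL S x ⬝ᵥ y = x ⬝ᵥ projL S y := by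
  have h1 : (y - projL S y) ⬝ᵥ projL S x = 0 := projL_orth S y _ (projL_mem S x)
  have h2 : (x - projL S x) ⬝ᵥ projL S y = 0 := projL_orth S x _ (projL_mem S y)
  have e1 := sub_dotProduct y (projL S y) (projL S x)
  have e2 := sub_dotProduct x (projL S x) (projL S y)
  rw [h1] at e1; rw [h2] at e2
  have := dotProduct_comm (projL S x) y
  have := dotProduct_comm (projL S y) (projL S x)
  linarith

lemma isHermitian_of_isSymm {K : Matrix (Fin n) (Fin n) ℝ} (h : K.IsSymm) :
    K.IsHermitian := by
  rw [Matrix.IsHermitian, conjTranspose_eq_transpose_of_trivial]; exact h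

lemma dot_mulVec_comm {A : Matrix (Fin n) (Fin n) ℝ} (hA : A.IsSymm) (x y : Fin n → ℝ) :
    (A *ᵥ x) ⬝ᵥ y = x ⬝ᵥ (A *ᵥ y) := by
  rw [dotProduct_mulVec, ← mulVec_transpose, hA.eq]

lemma rayleigh {K : Matrix (Fin n) (Fin n) ℝ} (hK : K.IsHermitian) {t : ℝ}
    (h : ∀ (μ : ℝ) (v : Fin n → ℝ), v ≠ 0 → K *ᵥ v = μ • v → μ ≤ t) (x : Fin n → ℝ) :
    x ⬝ᵥ (K *ᵥ x) ≤ t * (x ⬝ᵥ x) := by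
  have hB : (t • (1 : Matrix (Fin n) (Fin n) ℝ) - K).IsHermitian := by
    unfold Matrix.IsHermitian
    rw [conjTranspose_sub, conjTranspose_smul, conjTranspose_one, hK.eq]
    simp
  have heig : ∀ i, 0 ≤ hB.eigenvalues i := by
    intro i
    have hv := hB.mulVec_eigenvectorBasis i
    set v : Fin n → ℝ := (WithLp.equiv 2 (Fin n → ℝ)) (hB.eigenvectorBasis i) with hvdef
    have hv0 : v ≠ 0 := by
      have hnz := hB.eigenvectorBasis.orthonormal.ne_zero i
      intro hc
      apply hnz
      apply (WithLp.equiv 2 (Fin n → ℝ)).injective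
      simpa [hvdef] using hc
    have hKv : K *ᵥ v = (t - hB.eigenvalues i) • v := by
      rw [sub_mulVec, smul_mulVec, one_mulVec] at hv
      rw [sub_smul]
      change t • v - K *ᵥ v = hB.eigenvalues i • v at hv
      linear_combination (norm := module) -hv
    have := h _ _ hv0 hKv
    linarith
  have hPSD := hB.posSemidef_iff_eigenvalues_nonneg.mpr heig
  have h0 := hPSD.dotProduct_mulVec_nonneg x
  simp only [star_trivial, RCLike.re_to_real] at h0
  rw [sub_mulVec, smul_mulVec, one_mulVec, dotProduct_sub, dotProduct_smul,
    smul_eq_mul] at h0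
  linarith

lemma abs_le_euclNorm (x : Fin n → ℝ) (i : Fin n) : |x i| ≤ euclNorm x := by
  rw [euclNorm, ← Real.sqrt_sq_eq_abs]
  exact Real.sqrt_le_sqrt (Finset.single_le_sum (f := fun j => x j ^ 2)
    (fun j _ => sq_nonneg _) (Finset.mem_univ i))

lemma toMatrix'_mulVec (L : (Fin n → ℝ) →ₗ[ℝ] (Fin n → ℝ)) (x : Fin n → ℝ) :
    (LinearMap.toMatrix' L) *ᵥ x = L x := by
  rw [← Matrix.toLin'_apply, Matrix.toLin'_toMatrix']

lemma isSymm_toMatrix' {L : (Fin n → ℝ) →ₗ[ℝ] (Fin n → ℝ)}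
    (h : ∀ x y, L x ⬝ᵥ y = x ⬝ᵥ L y) : (LinearMap.toMatrix' L).IsSymm := by
  set A := LinearMap.toMatrix' L with hA
  have key : ∀ i j, A j i = A i j := by
    intro i j
    have h1 := h (Pi.single i 1) (Pi.single j 1)
    rw [← toMatrix'_mulVec L (Pi.single i 1), ← toMatrix'_mulVec L (Pi.single j 1),
      ← hA, mulVec_single, mulVec_single] at h1
    simpa [dotProduct_single, single_dotProduct] using h1
  ext i j
  rw [Matrix.transpose_apply]
  exact key i j

end Stmt17Aux

set_option maxHeartbeats 2000000 in
open Stmt17Aux in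
/-- For orthogonal projections `P₁, P₂` onto subspaces `T₁, T₂` with Friedrichs angle
`ζ_F > 0`, the operator `M = P₁P₂ + (Id−P₁)(Id−P₂)` has convergent powers
`M^k → M∞`, and every `v₀` with `M∞ v₀ = 0` satisfies `M^k v₀ = (M − M∞)^k v₀` and
`‖(M − M∞)^k v₀‖ ≤ cos(ζ_F)^k ‖v₀‖`. -/
theorem stmt17 {n : ℕ}
    (T₁ T₂ : Submodule ℝ (Fin n → ℝ))
    (P₁ P₂ : Matrix (Fin n) (Fin n) ℝ)
    (hP₁s : P₁.IsSymm) (hP₁i : P₁ * P₁ = P₁)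
    (hP₁r : LinearMap.range P₁.mulVecLin = T₁)
    (hP₂s : P₂.IsSymm) (hP₂i : P₂ * P₂ = P₂)
    (hP₂r : LinearMap.range P₂.mulVecLin = T₂)
    (ζF : ℝ) (hζF0 : 0 < ζF) (hζF2 : ζF ≤ Real.pi / 2)
    (hFried : IsGreatest {t : ℝ | ∃ u v : Fin n → ℝ,
        u ∈ T₁ ∧ v ∈ T₂ ∧
        (∀ w ∈ T₁ ⊓ T₂, u ⬝ᵥ w = 0) ∧ (∀ w ∈ T₁ ⊓ T₂, v ⬝ᵥ w = 0) ∧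
        euclNorm u = 1 ∧ euclNorm v = 1 ∧ t = u ⬝ᵥ v} (Real.cos ζF)) :
    ∃ Minf : Matrix (Fin n) (Fin n) ℝ,
      Filter.Tendsto (fun k : ℕ => (P₁ * P₂ + (1 - P₁) * (1 - P₂)) ^ k)
        Filter.atTop (nhds Minf) ∧
      ∀ v0 : Fin n → ℝ, Minf.mulVec v0 = 0 →
        ∀ k : ℕ,
          ((P₁ * P₂ + (1 - P₁) * (1 - P₂)) ^ k).mulVec v0 =
            (((P₁ * P₂ + (1 - P₁) * (1 - P₂)) - Minf) ^ k).mulVec v0 ∧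
          euclNorm ((((P₁ * P₂ + (1 - P₁) * (1 - P₂)) - Minf) ^ k).mulVec v0) ≤
            Real.cos ζF ^ k * euclNorm v0 := by
  classical
  set c : ℝ := Real.cos ζF with hcdef
  set Q₁ : Matrix (Fin n) (Fin n) ℝ := 1 - P₁ with hQ₁def
  set Q₂ : Matrix (Fin n) (Fin n) ℝ := 1 - P₂ with hQ₂def
  set M : Matrix (Fin n) (Fin n) ℝ := P₁ * P₂ + Q₁ * Q₂ with hMdef
  -- basic facts about c
  have hπ := Real.pi_pos
  have hc0 : 0 ≤ c := Real.cos_nonneg_of_mem_Icc ⟨by linarith, hζF2⟩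
  have hc1 : c < 1 := by
    have := Real.cos_lt_cos_of_nonneg_of_le_pi (le_refl (0:ℝ)) (by linarith) hζF0
    simpa using this
  -- vector-level projection facts
  have hP₁v : ∀ x, P₁ *ᵥ (P₁ *ᵥ x) = P₁ *ᵥ x := fun x => by
    rw [mulVec_mulVec, hP₁i]
  have hP₂v : ∀ x, P₂ *ᵥ (P₂ *ᵥ x) = P₂ *ᵥ x := fun x => by
    rw [mulVec_mulVec, hP₂i]
  have hQ₁v : ∀ x, Q₁ *ᵥ x = x - P₁ *ᵥ x := fun x => by
    rw [hQ₁def, sub_mulVec, one_mulVec]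
  have hQ₂v : ∀ x, Q₂ *ᵥ x = x - P₂ *ᵥ x := fun x => by
    rw [hQ₂def, sub_mulVec, one_mulVec]
  have hQ₁q : ∀ x, Q₁ *ᵥ (Q₁ *ᵥ x) = Q₁ *ᵥ x := fun x => by
    rw [hQ₁v x, hQ₁v, mulVec_sub, hP₁v]; abel
  have hQ₂q : ∀ x, Q₂ *ᵥ (Q₂ *ᵥ x) = Q₂ *ᵥ x := fun x => by
    rw [hQ₂v x, hQ₂v, mulVec_sub, hP₂v]; abel
  have hP₁Q₁ : ∀ x, P₁ *ᵥ (Q₁ *ᵥ x) = 0 := fun x => by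
    rw [hQ₁v, mulVec_sub, hP₁v, sub_self]
  have hQ₁P₁ : ∀ x, Q₁ *ᵥ (P₁ *ᵥ x) = 0 := fun x => by
    rw [hQ₁v, hP₁v, sub_self]
  have hP₂Q₂ : ∀ x, P₂ *ᵥ (Q₂ *ᵥ x) = 0 := fun x => by
    rw [hQ₂v, mulVec_sub, hP₂v, sub_self]
  have hQ₂P₂ : ∀ x, Q₂ *ᵥ (P₂ *ᵥ x) = 0 := fun x => by
    rw [hQ₂v, hP₂v, sub_self]
  have hQ₁s : Q₁.IsSymm := Matrix.isSymm_one.sub hP₁s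
  have hQ₂s : Q₂.IsSymm := Matrix.isSymm_one.sub hP₂s
  have hP₁d : ∀ x y, (P₁ *ᵥ x) ⬝ᵥ y = x ⬝ᵥ (P₁ *ᵥ y) := dot_mulVec_comm hP₁s
  have hP₂d : ∀ x y, (P₂ *ᵥ x) ⬝ᵥ y = x ⬝ᵥ (P₂ *ᵥ y) := dot_mulVec_comm hP₂s
  have hQ₁d : ∀ x y, (Q₁ *ᵥ x) ⬝ᵥ y = x ⬝ᵥ (Q₁ *ᵥ y) := dot_mulVec_comm hQ₁s
  have hQ₂d : ∀ x y, (Q₂ *ᵥ x) ⬝ᵥ y = x ⬝ᵥ (Q₂ *ᵥ y) := dot_mulVec_comm hQ₂s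
  -- membership characterizations
  have hmT₁ : ∀ x, x ∈ T₁ ↔ P₁ *ᵥ x = x := by
    intro x
    constructor
    · intro hx
      rw [← hP₁r] at hx
      obtain ⟨y, hy⟩ := hx
      rw [Matrix.mulVecLin_apply] at hy
      rw [← hy, hP₁v]
    · intro hx
      rw [← hP₁r]
      exact ⟨x, by rw [Matrix.mulVecLin_apply, hx]⟩
  have hmT₂ : ∀ x, x ∈ T₂ ↔ P₂ *ᵥ x = x := by
    intro x
    constructor
    · intro hx
      rw [← hP₂r] at hx
      obtain ⟨y, hy⟩ := hx
      rw [Matrix.mulVecLin_apply] at hy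
      rw [← hy, hP₂v]
    · intro hx
      rw [← hP₂r]
      exact ⟨x, by rw [Matrix.mulVecLin_apply, hx]⟩
  set Cs : Submodule ℝ (Fin n → ℝ) := T₁ ⊓ T₂ with hCs
  set Ds : Submodule ℝ (Fin n → ℝ) :=
    LinearMap.ker P₁.mulVecLin ⊓ LinearMap.ker P₂.mulVecLin with hDs
  set Fs : Submodule ℝ (Fin n → ℝ) := Cs ⊔ Ds with hFs
  have hmCs : ∀ x, x ∈ Cs ↔ (P₁ *ᵥ x = x ∧ P₂ *ᵥ x = x) := by
    intro x
    rw [hCs, Submodule.mem_inf, hmT₁, hmT₂]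
  have hmDs : ∀ x, x ∈ Ds ↔ (P₁ *ᵥ x = 0 ∧ P₂ *ᵥ x = 0) := by
    intro x
    rw [hDs, Submodule.mem_inf, LinearMap.mem_ker, LinearMap.mem_ker,
      Matrix.mulVecLin_apply, Matrix.mulVecLin_apply]
  -- the Friedrichs upper bound, bilinear form
  have hFB : ∀ u v : Fin n → ℝ, u ∈ T₁ → v ∈ T₂ → (∀ w ∈ Cs, u ⬝ᵥ w = 0) →
      (∀ w ∈ Cs, v ⬝ᵥ w = 0) → u ⬝ᵥ v ≤ c * (euclNorm u * euclNorm v) := by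
    intro u v hu hv huo hvo
    by_cases hu0 : u = 0
    · simp [hu0, euclNorm]
    by_cases hv0 : v = 0
    · simp [hv0, euclNorm]
    have hnu : 0 < euclNorm u :=
      lt_of_le_of_ne (euclNorm_nonneg u) (fun h => hu0 (euclNorm_eq_zero.mp h.symm))
    have hnv : 0 < euclNorm v :=
      lt_of_le_of_ne (euclNorm_nonneg v) (fun h => hv0 (euclNorm_eq_zero.mp h.symm))
    have hmem : ((euclNorm u)⁻¹ • u) ⬝ᵥ ((euclNorm v)⁻¹ • v) ∈ {t : ℝ | ∃ u v : Fin n → ℝ,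
        u ∈ T₁ ∧ v ∈ T₂ ∧
        (∀ w ∈ T₁ ⊓ T₂, u ⬝ᵥ w = 0) ∧ (∀ w ∈ T₁ ⊓ T₂, v ⬝ᵥ w = 0) ∧
        euclNorm u = 1 ∧ euclNorm v = 1 ∧ t = u ⬝ᵥ v} := by
      refine ⟨(euclNorm u)⁻¹ • u, (euclNorm v)⁻¹ • v,
        Submodule.smul_mem _ _ hu, Submodule.smul_mem _ _ hv,
        fun w hw => by rw [smul_dotProduct, huo w hw, smul_eq_mul, mul_zero],
        fun w hw => by rw [smul_dotProduct, hvo w hw, smul_eq_mul, mul_zero], ?_, ?_, rfl⟩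
      · rw [euclNorm_smul, abs_of_nonneg (by positivity), inv_mul_cancel₀ hnu.ne']
      · rw [euclNorm_smul, abs_of_nonneg (by positivity), inv_mul_cancel₀ hnv.ne']
    have hle := hFried.2 hmem
    rw [smul_dotProduct, dotProduct_smul, smul_eq_mul, smul_eq_mul] at hle
    have key := mul_le_mul_of_nonneg_left hle (le_of_lt (mul_pos hnu hnv))
    calc u ⬝ᵥ v
        = (euclNorm u * euclNorm v) * ((euclNorm u)⁻¹ * ((euclNorm v)⁻¹ * (u ⬝ᵥ v))) := by
          field_simp
      _ ≤ (euclNorm u * euclNorm v) * c := key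
      _ = c * (euclNorm u * euclNorm v) := by ring
  -- primal lemma
  have hPrimal : ∀ y : Fin n → ℝ, y ∈ T₂ → (∀ w ∈ Cs, y ⬝ᵥ w = 0) →
      euclNorm (P₁ *ᵥ y) ≤ c * euclNorm y := by
    intro y hy hyo
    set p : Fin n → ℝ := P₁ *ᵥ y with hp
    have hpT₁ : p ∈ T₁ := (hmT₁ p).mpr (hP₁v y)
    set p₀ : Fin n → ℝ := projL Cs p with hp₀
    set p₁ : Fin n → ℝ := p - p₀ with hp₁
    have hp₀Cs : p₀ ∈ Cs := projL_mem Cs p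
    have hp₁T₁ : p₁ ∈ T₁ := Submodule.sub_mem T₁ hpT₁ (Submodule.mem_inf.mp hp₀Cs).1
    have hp₁o : ∀ w ∈ Cs, p₁ ⬝ᵥ w = 0 := projL_orth Cs p
    have hpy : p ⬝ᵥ p = p₁ ⬝ᵥ y := by
      have e1 : p ⬝ᵥ p = p ⬝ᵥ y := by
        conv_lhs => rw [hp, hP₁d, hP₁v, ← hp]
        rw [dotProduct_comm]
      have e2 : p₀ ⬝ᵥ y = 0 := by
        rw [dotProduct_comm]; exact hyo p₀ hp₀Cs
      rw [e1, hp₁, sub_dotProduct, e2, sub_zero]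
    have hp₁le : euclNorm p₁ ≤ euclNorm p := by
      apply euclNorm_le_of_sq_le
      have horth : p₀ ⬝ᵥ p₁ = 0 := by
        rw [dotProduct_comm]; exact hp₁o p₀ hp₀Cs
      have hpyt := pythag horth
      have hdecomp : p₀ + p₁ = p := by rw [hp₁]; abel
      rw [hdecomp] at hpyt
      nlinarith [euclNorm_sq p₀, euclNorm_nonneg p₀, sq_nonneg (euclNorm p₀)]
    have hb := hFB p₁ y hp₁T₁ hy hp₁o hyo
    have hfin : p ⬝ᵥ p ≤ c * (euclNorm p * euclNorm y) := by
      calc p ⬝ᵥ p = p₁ ⬝ᵥ y := hpy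
        _ ≤ c * (euclNorm p₁ * euclNorm y) := hb
        _ ≤ c * (euclNorm p * euclNorm y) := by
            apply mul_le_mul_of_nonneg_left _ hc0
            exact mul_le_mul_of_nonneg_right hp₁le (euclNorm_nonneg y)
    have hpsq := euclNorm_sq p
    nlinarith [euclNorm_nonneg p, euclNorm_nonneg y,
      mul_nonneg hc0 (euclNorm_nonneg y)]
  have hnn : ∀ x : Fin n → ℝ, 0 ≤ x ⬝ᵥ x := fun x => by
    nlinarith [euclNorm_sq x, sq_nonneg (euclNorm x)]
  -- matrix of orthogonal projection onto Ds
  set PD : Matrix (Fin n) (Fin n) ℝ := LinearMap.toMatrix' (projL Ds) with hPDdef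
  have hPDv : ∀ x, PD *ᵥ x = projL Ds x := fun x => toMatrix'_mulVec _ x
  set G : Matrix (Fin n) (Fin n) ℝ := Q₂ * Q₁ * Q₂ with hGdef
  have hGv : ∀ x, G *ᵥ x = Q₂ *ᵥ (Q₁ *ᵥ (Q₂ *ᵥ x)) := fun x => by
    rw [hGdef, ← mulVec_mulVec, ← mulVec_mulVec]
  have hGd : ∀ x y, (G *ᵥ x) ⬝ᵥ y = x ⬝ᵥ (G *ᵥ y) := by
    intro x y
    rw [hGv, hGv, hQ₂d, hQ₁d, hQ₂d]
  have hGfixD : ∀ d ∈ Ds, G *ᵥ d = d := by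
    intro d hd
    obtain ⟨h1, h2⟩ := (hmDs d).mp hd
    have hq2 : Q₂ *ᵥ d = d := by rw [hQ₂v, h2, sub_zero]
    have hq1 : Q₁ *ᵥ d = d := by rw [hQ₁v, h1, sub_zero]
    rw [hGv, hq2, hq1, hq2]
  -- eigenvalue bound for H = G - PD
  have hEig : ∀ (μ : ℝ) (v : Fin n → ℝ), v ≠ 0 → (G - PD) *ᵥ v = μ • v → μ ≤ c ^ 2 := by
    intro μ v hv0 heq
    rcases le_or_gt μ 0 with hμ | hμ
    · nlinarith
    have hvv : 0 < v ⬝ᵥ v := lt_of_le_of_ne (hnn v) (fun h => hv0 (dot_self_zero h.symm))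
    have heq' : G *ᵥ v - projL Ds v = μ • v := by
      rw [← hPDv, ← sub_mulVec, heq]
    have hPDG : ∀ x, projL Ds (G *ᵥ x) = projL Ds x := by
      intro x
      have horth : ∀ w ∈ Ds, (G *ᵥ x - x) ⬝ᵥ w = 0 := by
        intro w hw
        rw [sub_dotProduct, hGd, hGfixD w hw, sub_self]
      have hz : projL Ds (G *ᵥ x - x) = 0 := (projL_eq_zero_iff Ds).mpr horth
      have h3 : projL Ds (G *ᵥ x) - projL Ds x = 0 := by rw [← map_sub]; exact hz
      exact sub_eq_zero.mp h3
    have hPDv0 : projL Ds v = 0 := by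
      have happ := congrArg (projL Ds) heq'
      have hfix : projL Ds (projL Ds v) = projL Ds v := projL_fix Ds (projL_mem Ds v)
      rw [map_sub, hPDG v, hfix, sub_self, _root_.map_smul] at happ
      exact ((smul_eq_zero.mp happ.symm).resolve_left hμ.ne').symm ▸ rfl
    have hGveq : G *ᵥ v = μ • v := by
      rw [hPDv0, sub_zero] at heq'; exact heq'
    have hP₂v0 : P₂ *ᵥ v = 0 := by
      have h1 : P₂ *ᵥ (G *ᵥ v) = 0 := by rw [hGv, hP₂Q₂]
      rw [hGveq, mulVec_smul] at h1
      exact (smul_eq_zero.mp h1).resolve_left hμ.ne'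
    have hQ₂veq : Q₂ *ᵥ v = v := by rw [hQ₂v, hP₂v0, sub_zero]
    set w : Fin n → ℝ := Q₁ *ᵥ v with hw
    have hQ₁w : Q₁ *ᵥ w = w := by rw [hw, hQ₁q]
    have hGvw : G *ᵥ v = Q₂ *ᵥ w := by rw [hGv, hQ₂veq, ← hw]
    have hQ₂w : Q₂ *ᵥ w = μ • v := by rw [← hGvw, hGveq]
    have hwv : w ⬝ᵥ v = μ * (v ⬝ᵥ v) := by
      have e0 : (G *ᵥ v) ⬝ᵥ v = μ * (v ⬝ᵥ v) := by
        rw [hGveq, smul_dotProduct, smul_eq_mul]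
      rw [hGvw, hQ₂d, hQ₂veq] at e0
      exact e0
    have hww : w ⬝ᵥ w = μ * (v ⬝ᵥ v) := by
      have e1 := hQ₁d v w
      rw [← hw, hQ₁w] at e1
      rw [e1, dotProduct_comm, hwv]
    have hP₂w : P₂ *ᵥ w = w - μ • v := by
      have e := hQ₂v w
      rw [hQ₂w] at e
      linear_combination (norm := module) e
    have hμ1 : μ < 1 := by
      rcases lt_or_ge μ 1 with h | h
      · exact h
      exfalso
      have e2 : P₁ *ᵥ v = v - w := by
        have e := hQ₁v v
        rw [← hw] at e
        linear_combination (norm := module) e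
      have hPv : (P₁ *ᵥ v) ⬝ᵥ (P₁ *ᵥ v) = (1 - μ) * (v ⬝ᵥ v) := by
        have e1 : (P₁ *ᵥ v) ⬝ᵥ (P₁ *ᵥ v) = v ⬝ᵥ (P₁ *ᵥ v) := by rw [hP₁d, hP₁v]
        rw [e1, e2, dotProduct_sub, dotProduct_comm v w, hwv]
        ring
      have hP₁v0 : P₁ *ᵥ v = 0 := by
        apply dot_self_zero
        have h0 : (P₁ *ᵥ v) ⬝ᵥ (P₁ *ᵥ v) ≤ 0 := by nlinarith
        exact le_antisymm h0 (hnn _)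
      have hvDs : v ∈ Ds := (hmDs v).mpr ⟨hP₁v0, hP₂v0⟩
      have hfx := projL_fix Ds hvDs
      rw [hPDv0] at hfx
      exact hv0 hfx.symm
    -- transfer to an eigenvector of P₂P₁P₂
    set x : Fin n → ℝ := P₂ *ᵥ w with hx
    have hP₂x : P₂ *ᵥ x = x := by rw [hx, hP₂v]
    have hxw : x = w - μ • v := hP₂w
    have hQ₁x : Q₁ *ᵥ x = w - μ • w := by
      have h1 : Q₁ *ᵥ x = Q₁ *ᵥ w - Q₁ *ᵥ (μ • v) := by rw [hxw, mulVec_sub]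
      rw [h1, hQ₁w, mulVec_smul, ← hw]
    have hP₁x : P₁ *ᵥ x = x - w + μ • w := by
      have e := hQ₁v x
      rw [hQ₁x] at e
      linear_combination (norm := module) e
    have hP₂P₁x : P₂ *ᵥ (P₁ *ᵥ x) = μ • x := by
      rw [hP₁x]
      have : P₂ *ᵥ (x - w + μ • w) = P₂ *ᵥ x - P₂ *ᵥ w + μ • (P₂ *ᵥ w) := by
        rw [mulVec_add, mulVec_sub, mulVec_smul]
      rw [this, hP₂x, ← hx]
      abel
    have hxx : x ⬝ᵥ x = μ * (1 - μ) * (v ⬝ᵥ v) := by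
      have e1 := hP₂d w x
      rw [← hx, hP₂x] at e1
      have e2 : w ⬝ᵥ x = w ⬝ᵥ w - μ * (w ⬝ᵥ v) := by
        rw [hxw, dotProduct_sub, dotProduct_smul, smul_eq_mul]
      rw [e1, e2, hww, hwv]
      ring
    have hxxpos : 0 < x ⬝ᵥ x := by
      rw [hxx]
      have : 0 < μ * (1 - μ) := by nlinarith
      positivity
    have hx0 : x ≠ 0 := by
      intro h
      rw [h] at hxxpos
      simp at hxxpos
    have hxT₂ : x ∈ T₂ := (hmT₂ x).mpr hP₂x
    have hxo : ∀ u ∈ Cs, x ⬝ᵥ u = 0 := by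
      intro u hu
      obtain ⟨hu1, hu2⟩ := (hmCs u).mp hu
      have e1 : x ⬝ᵥ u = w ⬝ᵥ u := by
        conv_lhs => rw [hx]
        rw [hP₂d, hu2]
      have e2 : w ⬝ᵥ u = 0 := by
        rw [hw, hQ₁d, hQ₁v, hu1, sub_self, dotProduct_zero]
      rw [e1, e2]
    have hprim := hPrimal x hxT₂ hxo
    have e5 : (P₁ *ᵥ x) ⬝ᵥ (P₁ *ᵥ x) = μ * (x ⬝ᵥ x) := by
      have e6 : (P₁ *ᵥ x) ⬝ᵥ (P₁ *ᵥ x) = x ⬝ᵥ (P₁ *ᵥ x) := by rw [hP₁d, hP₁v]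
      have e7 := hP₂d x (P₁ *ᵥ x)
      rw [hP₂x, hP₂P₁x, dotProduct_smul, smul_eq_mul] at e7
      rw [e6, e7]
    have hsq : (P₁ *ᵥ x) ⬝ᵥ (P₁ *ᵥ x) ≤ c ^ 2 * (x ⬝ᵥ x) := by
      have h1 := euclNorm_sq (P₁ *ᵥ x)
      have h2 := euclNorm_sq x
      nlinarith [euclNorm_nonneg (P₁ *ᵥ x), euclNorm_nonneg x, hc0]
    nlinarith [hsq, e5, hxxpos]
  -- the dual bound
  have hHsymm : (G - PD).IsSymm := by
    apply Matrix.IsSymm.sub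
    · show (Q₂ * Q₁ * Q₂)ᵀ = Q₂ * Q₁ * Q₂
      rw [Matrix.transpose_mul, Matrix.transpose_mul, hQ₁s.eq, hQ₂s.eq, Matrix.mul_assoc]
    · exact isSymm_toMatrix' (fun a b => projL_symm_dot Ds a b)
  have hDual : ∀ z : Fin n → ℝ, P₂ *ᵥ z = 0 → (∀ w ∈ Ds, z ⬝ᵥ w = 0) →
      euclNorm (Q₁ *ᵥ z) ≤ c * euclNorm z := by
    intro z hz2 hzo
    have hray := rayleigh (isHermitian_of_isSymm hHsymm) hEig z
    have hPDz : PD *ᵥ z = 0 := by rw [hPDv]; exact (projL_eq_zero_iff Ds).mpr hzo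
    have hQ₂z : Q₂ *ᵥ z = z := by rw [hQ₂v, hz2, sub_zero]
    have hq : z ⬝ᵥ ((G - PD) *ᵥ z) = (Q₁ *ᵥ z) ⬝ᵥ (Q₁ *ᵥ z) := by
      have el : z ⬝ᵥ ((G - PD) *ᵥ z) = z ⬝ᵥ (Q₁ *ᵥ z) := by
        rw [sub_mulVec, hPDz, sub_zero, hGv, hQ₂z, ← hQ₂d, hQ₂z]
      have er : (Q₁ *ᵥ z) ⬝ᵥ (Q₁ *ᵥ z) = z ⬝ᵥ (Q₁ *ᵥ z) := by rw [hQ₁d, hQ₁q]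
      rw [el, er]
    have hcs : (Q₁ *ᵥ z) ⬝ᵥ (Q₁ *ᵥ z) ≤ (c • z) ⬝ᵥ (c • z) := by
      rw [smul_dotProduct, dotProduct_smul, smul_eq_mul, smul_eq_mul]
      nlinarith [hray, hq]
    have hfin := euclNorm_le_of_sq_le hcs
    rwa [euclNorm_smul, abs_of_nonneg hc0] at hfin
  have hMv : ∀ x, M *ᵥ x = P₁ *ᵥ (P₂ *ᵥ x) + Q₁ *ᵥ (Q₂ *ᵥ x) := fun x => by
    rw [hMdef, add_mulVec, ← mulVec_mulVec, ← mulVec_mulVec]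
  have hKey : ∀ x : Fin n → ℝ, (∀ w ∈ Cs, x ⬝ᵥ w = 0) → (∀ w ∈ Ds, x ⬝ᵥ w = 0) →
      euclNorm (M *ᵥ x) ≤ c * euclNorm x := by
    intro x hxC hxD
    set y : Fin n → ℝ := P₂ *ᵥ x with hy
    set z : Fin n → ℝ := Q₂ *ᵥ x with hz
    have hyT₂ : y ∈ T₂ := (hmT₂ y).mpr (hP₂v x)
    have hyC : ∀ w ∈ Cs, y ⬝ᵥ w = 0 := by
      intro w hw
      obtain ⟨hw1, hw2⟩ := (hmCs w).mp hw
      rw [hy, hP₂d, hw2]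
      exact hxC w hw
    have hzP₂ : P₂ *ᵥ z = 0 := by rw [hz, hP₂Q₂]
    have hzD : ∀ w ∈ Ds, z ⬝ᵥ w = 0 := by
      intro w hw
      obtain ⟨hw1, hw2⟩ := (hmDs w).mp hw
      have hq2 : Q₂ *ᵥ w = w := by rw [hQ₂v, hw2, sub_zero]
      rw [hz, hQ₂d, hq2]
      exact hxD w hw
    have h1 := hPrimal y hyT₂ hyC
    have h2 := hDual z hzP₂ hzD
    have hsplit : M *ᵥ x = P₁ *ᵥ y + Q₁ *ᵥ z := by rw [hMv x, ← hy, ← hz]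
    have horth : (P₁ *ᵥ y) ⬝ᵥ (Q₁ *ᵥ z) = 0 := by
      rw [hP₁d, hP₁Q₁, dotProduct_zero]
    have hyz : y ⬝ᵥ z = 0 := by
      rw [hy, hP₂d, hzP₂, dotProduct_zero]
    have hxyz : x = y + z := by rw [hy, hz, hQ₂v]; abel
    have hsq1 : (P₁ *ᵥ y) ⬝ᵥ (P₁ *ᵥ y) ≤ c ^ 2 * (y ⬝ᵥ y) := by
      have a1 := euclNorm_sq (P₁ *ᵥ y)
      have a2 := euclNorm_sq y
      nlinarith [euclNorm_nonneg (P₁ *ᵥ y), euclNorm_nonneg y, hc0]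
    have hsq2 : (Q₁ *ᵥ z) ⬝ᵥ (Q₁ *ᵥ z) ≤ c ^ 2 * (z ⬝ᵥ z) := by
      have a1 := euclNorm_sq (Q₁ *ᵥ z)
      have a2 := euclNorm_sq z
      nlinarith [euclNorm_nonneg (Q₁ *ᵥ z), euclNorm_nonneg z, hc0]
    have hMsq : (M *ᵥ x) ⬝ᵥ (M *ᵥ x) = (P₁ *ᵥ y) ⬝ᵥ (P₁ *ᵥ y) + (Q₁ *ᵥ z) ⬝ᵥ (Q₁ *ᵥ z) := by
      rw [hsplit, pythag horth]
    have hxsq : x ⬝ᵥ x = y ⬝ᵥ y + z ⬝ᵥ z := by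
      conv_lhs => rw [hxyz]
      exact pythag hyz
    have hfin : (M *ᵥ x) ⬝ᵥ (M *ᵥ x) ≤ (c • x) ⬝ᵥ (c • x) := by
      rw [smul_dotProduct, dotProduct_smul, smul_eq_mul, smul_eq_mul, hMsq, hxsq]
      nlinarith
    have hres := euclNorm_le_of_sq_le hfin
    rwa [euclNorm_smul, abs_of_nonneg hc0] at hres
  -- fixed-point facts
  have hMone : ∀ u, P₁ *ᵥ u = u → P₂ *ᵥ u = u → M *ᵥ u = u := by
    intro u h1 h2
    have hq : Q₂ *ᵥ u = 0 := by rw [hQ₂v, h2, sub_self]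
    rw [hMv, h2, h1, hq, mulVec_zero, add_zero]
  have hMtwo : ∀ d, P₁ *ᵥ d = 0 → P₂ *ᵥ d = 0 → M *ᵥ d = d := by
    intro d h1 h2
    have hq2 : Q₂ *ᵥ d = d := by rw [hQ₂v, h2, sub_zero]
    have hq1 : Q₁ *ᵥ d = d := by rw [hQ₁v, h1, sub_zero]
    rw [hMv, h2, mulVec_zero, hq2, hq1, zero_add]
  have hMfix : ∀ f ∈ Fs, M *ᵥ f = f := by
    intro f hf
    obtain ⟨u, hu, d, hd, rfl⟩ := Submodule.mem_sup.mp hf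
    obtain ⟨hu1, hu2⟩ := (hmCs u).mp hu
    obtain ⟨hd1, hd2⟩ := (hmDs d).mp hd
    rw [mulVec_add, hMone u hu1 hu2, hMtwo d hd1 hd2]
  have hMadj : ∀ (x f : Fin n → ℝ), f ∈ Fs → (M *ᵥ x) ⬝ᵥ f = x ⬝ᵥ f := by
    intro x f hf
    have hrw : (M *ᵥ x) ⬝ᵥ f = x ⬝ᵥ (P₂ *ᵥ (P₁ *ᵥ f)) + x ⬝ᵥ (Q₂ *ᵥ (Q₁ *ᵥ f)) := by
      rw [hMv, add_dotProduct, hP₁d, hP₂d, hQ₁d, hQ₂d]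
    have hNf : P₂ *ᵥ (P₁ *ᵥ f) + Q₂ *ᵥ (Q₁ *ᵥ f) = f := by
      obtain ⟨u, hu, d, hd, rfl⟩ := Submodule.mem_sup.mp hf
      obtain ⟨hu1, hu2⟩ := (hmCs u).mp hu
      obtain ⟨hd1, hd2⟩ := (hmDs d).mp hd
      have hq1u : Q₁ *ᵥ u = 0 := by rw [hQ₁v, hu1, sub_self]
      have hq1d : Q₁ *ᵥ d = d := by rw [hQ₁v, hd1, sub_zero]
      have hq2d : Q₂ *ᵥ d = d := by rw [hQ₂v, hd2, sub_zero]
      have e1 : P₁ *ᵥ (u + d) = u := by rw [mulVec_add, hu1, hd1, add_zero]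
      have e2 : Q₁ *ᵥ (u + d) = d := by rw [mulVec_add, hq1u, hq1d, zero_add]
      rw [e1, e2, hu2, hq2d]
    rw [hrw, ← dotProduct_add, hNf]
  set Pinf : Matrix (Fin n) (Fin n) ℝ := LinearMap.toMatrix' (projL Fs) with hPinfdef
  have hPinfv : ∀ x, Pinf *ᵥ x = projL Fs x := fun x => toMatrix'_mulVec _ x
  have hMorth : ∀ x, (∀ w ∈ Fs, x ⬝ᵥ w = 0) → (∀ w ∈ Fs, (M *ᵥ x) ⬝ᵥ w = 0) := by
    intro x hx w hw
    rw [hMadj x w hw]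
    exact hx w hw
  have hIter : ∀ (k : ℕ) (x : Fin n → ℝ), (∀ w ∈ Fs, x ⬝ᵥ w = 0) →
      (∀ w ∈ Fs, (M ^ k *ᵥ x) ⬝ᵥ w = 0) ∧ euclNorm (M ^ k *ᵥ x) ≤ c ^ k * euclNorm x := by
    intro k
    induction k with
    | zero =>
      intro x hx
      constructor
      · intro w hw
        rw [pow_zero, one_mulVec]
        exact hx w hw
      · rw [pow_zero, one_mulVec, pow_zero, one_mul]
    | succ k ih =>
      intro x hx
      have hM1 : M ^ (k + 1) *ᵥ x = M *ᵥ (M ^ k *ᵥ x) := by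
        rw [mulVec_mulVec, ← pow_succ']
      obtain ⟨ho, hn⟩ := ih x hx
      constructor
      · rw [hM1]
        exact hMorth _ ho
      · rw [hM1]
        have hCsub : ∀ w ∈ Cs, (M ^ k *ᵥ x) ⬝ᵥ w = 0 := fun w hw =>
          ho w (Submodule.mem_sup_left hw)
        have hDsub : ∀ w ∈ Ds, (M ^ k *ᵥ x) ⬝ᵥ w = 0 := fun w hw =>
          ho w (Submodule.mem_sup_right hw)
        calc euclNorm (M *ᵥ (M ^ k *ᵥ x)) ≤ c * euclNorm (M ^ k *ᵥ x) :=
              hKey _ hCsub hDsub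
          _ ≤ c * (c ^ k * euclNorm x) := mul_le_mul_of_nonneg_left hn hc0
          _ = c ^ (k + 1) * euclNorm x := by ring
  have hMkfix : ∀ (k : ℕ), ∀ f ∈ Fs, M ^ k *ᵥ f = f := by
    intro k
    induction k with
    | zero => intro f hf; rw [pow_zero, one_mulVec]
    | succ k ih =>
      intro f hf
      rw [pow_succ, ← mulVec_mulVec, hMfix f hf, ih f hf]
  refine ⟨Pinf, ?_, ?_⟩
  · apply tendsto_pi_nhds.mpr
    intro i
    rw [tendsto_pi_nhds]
    intro j
    set s : Fin n → ℝ := Pi.single j 1 with hs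
    set g : Fin n → ℝ := s - projL Fs s with hg
    have hgo : ∀ w ∈ Fs, g ⬝ᵥ w = 0 := projL_orth Fs s
    have hdecomp : ∀ k : ℕ, (M ^ k) i j = (projL Fs s) i + (M ^ k *ᵥ g) i := by
      intro k
      have hsg : s = projL Fs s + g := by rw [hg]; abel
      have h1 : M ^ k *ᵥ s = projL Fs s + M ^ k *ᵥ g := by
        conv_lhs => rw [hsg]
        rw [mulVec_add, hMkfix k _ (projL_mem Fs s)]
      have h2 : (M ^ k *ᵥ s) i = (M ^ k) i j := by
        rw [hs, mulVec_single]
        exact mul_one _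
      rw [← h2, h1]
      rfl
    have hPinfentry : Pinf i j = (projL Fs s) i := by
      have h3 := congrFun (hPinfv s) i
      have h4 : (Pinf *ᵥ s) i = Pinf i j := by
        rw [hs, mulVec_single]
        exact mul_one _
      rw [← h4, h3]
    have hbound : ∀ k : ℕ, ‖(M ^ k) i j - Pinf i j‖ ≤ c ^ k * euclNorm g := by
      intro k
      rw [hdecomp k, hPinfentry, Real.norm_eq_abs]
      have e : (projL Fs s) i + (M ^ k *ᵥ g) i - (projL Fs s) i = (M ^ k *ᵥ g) i := by
        ring
      rw [e]
      calc |(M ^ k *ᵥ g) i| ≤ euclNorm (M ^ k *ᵥ g) := abs_le_euclNorm _ i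
        _ ≤ c ^ k * euclNorm g := (hIter k g hgo).2
    have htend0 : Filter.Tendsto (fun k : ℕ => c ^ k * euclNorm g)
        Filter.atTop (nhds 0) := by
      have ht := tendsto_pow_atTop_nhds_zero_of_lt_one hc0 hc1
      simpa using ht.mul_const (euclNorm g)
    have hdiff : Filter.Tendsto (fun k : ℕ => (M ^ k) i j - Pinf i j)
        Filter.atTop (nhds 0) := squeeze_zero_norm hbound htend0
    have hfin := hdiff.add_const (Pinf i j)
    simpa using hfin
  · intro v0 hv0 k
    have hv0' : projL Fs v0 = 0 := by rw [← hPinfv]; exact hv0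
    have horth : ∀ w ∈ Fs, v0 ⬝ᵥ w = 0 := (projL_eq_zero_iff Fs).mp hv0'
    have hclaim : ∀ k : ℕ, M ^ k *ᵥ v0 = (M - Pinf) ^ k *ᵥ v0 := by
      intro k
      induction k with
      | zero => rw [pow_zero, pow_zero]
      | succ k ih =>
        have ho := (hIter k v0 horth).1
        have hPz : Pinf *ᵥ (M ^ k *ᵥ v0) = 0 := by
          rw [hPinfv]
          exact (projL_eq_zero_iff Fs).mpr ho
        have h1 : (M - Pinf) ^ (k + 1) *ᵥ v0 = (M - Pinf) *ᵥ ((M - Pinf) ^ k *ᵥ v0) := by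
          rw [mulVec_mulVec, ← pow_succ']
        have h2 : M ^ (k + 1) *ᵥ v0 = M *ᵥ (M ^ k *ᵥ v0) := by
          rw [mulVec_mulVec, ← pow_succ']
        rw [h1, ← ih, sub_mulVec, hPz, sub_zero, h2]
    exact ⟨hclaim k, by rw [← hclaim k]; exact (hIter k v0 horth).2⟩
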